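/- Let n ≥ 1 and p be natural numbers, let α ∈ ℂ, and let z ∈ ℂ with z ≠ −1. Then: Σ_{j=0}^n C(n,j) j^p H_j(α) z^j = Σ_{l=0}^p Σ_{j=0}^p (−1)^l C(n,l) C(n−l, j−l) · j! · S(p,j) · (1+z)^{n−l} · ( H_{n−l}( (1 + αz)/(1 + z) ) − H_{n−l}( 1/(1 + z) ) ). -/

import Mathlib

open Finset

/-- The generalized harmonic number `H_n(α) = ∑_{k=1}^n α^k / k`. -/
noncomputable def genHarmonic (α : ℂ) (n : ℕ) : ℂ :=
  ∑ k ∈ Finset.Icc 1 n, α ^ k / (k : ℂ)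

/-- Stirling numbers of the second kind: `stirling2 p j` is the number of partitions of a
`p`-element set into `j` nonempty blocks. -/
def stirling2 : ℕ → ℕ → ℕ
  | 0, 0 => 1
  | 0, _ + 1 => 0
  | _ + 1, 0 => 0
  | p + 1, j + 1 => (j + 1) * stirling2 p (j + 1) + stirling2 p j

lemma stirling2_eq_zero_of_lt : ∀ {p k : ℕ}, p < k → stirling2 p k = 0
  | 0, 0, h => absurd h (lt_irrefl 0)
  | 0, k + 1, _ => rfl
  | p + 1, 0, h => absurd h (Nat.not_lt_zero _).elim
  | p + 1, k + 1, h => by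
    have h1 : p < k + 1 := Nat.lt_of_succ_lt_succ h |>.trans (Nat.lt_succ_self k)
    have h2 : p < k := Nat.lt_of_succ_lt_succ h
    simp [stirling2, stirling2_eq_zero_of_lt h1, stirling2_eq_zero_of_lt h2]

lemma jmul_choose (j k : ℕ) : j * j.choose k = (k+1) * j.choose (k+1) + k * j.choose k := by
  rcases le_or_gt k j with h | h
  · have h2 := Nat.choose_succ_right_eq j k
    have h3 : j - k + k = j := Nat.sub_add_cancel h
    calc j * j.choose k = j.choose k * (j - k) + j.choose k * k := by
            rw [← mul_add, h3]; ring
      _ = (k+1) * j.choose (k+1) + k * j.choose k := by rw [← h2]; ring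
  · rw [Nat.choose_eq_zero_of_lt h, Nat.choose_eq_zero_of_lt (Nat.lt_succ_of_lt h)]
    simp

lemma pow_eq_sum_stirling2 (p j : ℕ) :
    j ^ p = ∑ k ∈ range (p + 1), stirling2 p k * k.factorial * j.choose k := by
  induction p with
  | zero => simp [stirling2]
  | succ p ih =>
    rw [pow_succ, mul_comm, ih, Finset.mul_sum, Finset.sum_range_succ' _ (p+1)]
    have h0 : stirling2 (p+1) 0 * Nat.factorial 0 * j.choose 0 = 0 := by simp [stirling2]
    rw [h0, add_zero]
    have : ∀ k, j * (stirling2 p k * k.factorial * j.choose k) =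
        stirling2 p k * (k+1).factorial * j.choose (k+1)
          + k * stirling2 p k * k.factorial * j.choose k := by
      intro k
      rw [Nat.factorial_succ]
      calc j * (stirling2 p k * k.factorial * j.choose k)
          = stirling2 p k * k.factorial * (j * j.choose k) := by ring
        _ = stirling2 p k * k.factorial * ((k+1) * j.choose (k+1) + k * j.choose k) := by
            rw [jmul_choose]
        _ = _ := by ring
    rw [Finset.sum_congr rfl fun k _ => this k, Finset.sum_add_distrib]
    have hsh : ∑ k ∈ range (p+1), k * stirling2 p k * k.factorial * j.choose k
        = ∑ k ∈ range (p+1), (k+1) * stirling2 p (k+1) * (k+1).factorial * j.choose (k+1) := by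
      rw [Finset.sum_range_succ' _ p]
      simp only [Nat.zero_mul, Nat.zero_mul, zero_mul, add_zero]
      rw [Finset.sum_range_succ]
      rw [stirling2_eq_zero_of_lt (Nat.lt_succ_self p)]
      simp
    rw [hsh, ← Finset.sum_add_distrib]
    apply Finset.sum_congr rfl
    intro k _
    show _ = stirling2 (p+1) (k+1) * (k+1).factorial * j.choose (k+1)
    rw [show stirling2 (p+1) (k+1) = (k+1) * stirling2 p (k+1) + stirling2 p k from rfl]
    ring

lemma genHarmonic_succ (α : ℂ) (n : ℕ) :
    genHarmonic α (n+1) = genHarmonic α n + α^(n+1) / ((n:ℂ)+1) := by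
  unfold genHarmonic
  rw [Finset.sum_Icc_succ_top (by omega)]
  push_cast; ring

lemma aux1 (x : ℂ) (m : ℕ) :
    ∑ i ∈ range (m+1), (Nat.choose m i : ℂ) * x^(i+1) / ((i:ℂ)+1)
      = ((1+x)^(m+1) - 1) / ((m:ℂ)+1) := by
  have hm : ((m:ℂ)+1) ≠ 0 := Nat.cast_add_one_ne_zero m
  rw [eq_div_iff hm, Finset.sum_mul]
  have key : ∀ i ∈ range (m+1), (Nat.choose m i : ℂ) * x^(i+1) / ((i:ℂ)+1) * ((m:ℂ)+1)
      = (Nat.choose (m+1) (i+1) : ℂ) * x^(i+1) := by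
    intro i _
    have hi : ((i:ℂ)+1) ≠ 0 := Nat.cast_add_one_ne_zero i
    have h := Nat.add_one_mul_choose_eq m i
    have h' : ((m:ℂ)+1) * (Nat.choose m i : ℂ) = (Nat.choose (m+1) (i+1) : ℂ) * ((i:ℂ)+1) := by
      exact_mod_cast congrArg (Nat.cast (R := ℂ)) h
    field_simp
    linear_combination x^(i+1) * h'
  rw [Finset.sum_congr rfl key]
  have hb : (1+x)^(m+1) = ∑ k ∈ range (m+2), x^k * (Nat.choose (m+1) k : ℂ) := by
    rw [add_comm 1 x, add_pow]; simp
  rw [hb, Finset.sum_range_succ' (fun k => x^k * ((Nat.choose (m+1) k : ℕ) : ℂ)) (m+1)]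
  simp [mul_comm]

lemma base (α z : ℂ) (hz : (1:ℂ) + z ≠ 0) (m : ℕ) :
    ∑ i ∈ range (m+1), (Nat.choose m i : ℂ) * genHarmonic α i * z^i
      = (1+z)^m * (genHarmonic ((1+α*z)/(1+z)) m - genHarmonic (1/(1+z)) m) := by
  induction m with
  | zero => simp [genHarmonic]
  | succ m ih =>
    have hβ : (1+z) * ((1+α*z)/(1+z)) = 1 + α*z := mul_div_cancel₀ _ hz
    have hγ : (1+z) * (1/(1+z)) = 1 := by field_simp
    have e1 : (1+z)^(m+1) * ((1+α*z)/(1+z))^(m+1) = (1+α*z)^(m+1) := by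
      rw [← mul_pow, hβ]
    have e2 : (1+z)^(m+1) * (1/(1+z))^(m+1) = 1 := by rw [← mul_pow, hγ, one_pow]
    -- peel off the i = 0 term
    rw [Finset.sum_range_succ'
      (fun i => (Nat.choose (m+1) i : ℂ) * genHarmonic α i * z^i) (m+1)]
    have h0 : (Nat.choose (m+1) 0 : ℂ) * genHarmonic α 0 * z^0 = 0 := by
      simp [genHarmonic]
    rw [h0, add_zero]
    -- expand the summand
    have hsummand : ∀ i ∈ range (m+1),
        (Nat.choose (m+1) (i+1) : ℂ) * genHarmonic α (i+1) * z^(i+1)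
          = (Nat.choose m i : ℂ) * genHarmonic α i * z^i * z
            + (Nat.choose m i : ℂ) * (α*z)^(i+1) / ((i:ℂ)+1)
            + (Nat.choose m (i+1) : ℂ) * genHarmonic α (i+1) * z^(i+1) := by
      intro i _
      rw [Nat.choose_succ_succ m i, genHarmonic_succ]
      push_cast
      rw [mul_pow]
      ring
    rw [Finset.sum_congr rfl hsummand, Finset.sum_add_distrib, Finset.sum_add_distrib,
      aux1 (α*z) m]
    have hS3 : ∑ i ∈ range (m+1), (Nat.choose m (i+1) : ℂ) * genHarmonic α (i+1) * z^(i+1)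
        = ∑ i ∈ range (m+1), (Nat.choose m i : ℂ) * genHarmonic α i * z^i := by
      rw [Finset.sum_range_succ]
      rw [Nat.choose_succ_self]
      rw [Finset.sum_range_succ'
        (fun i => (Nat.choose m i : ℂ) * genHarmonic α i * z^i) m]
      simp [genHarmonic]
    rw [hS3, ← Finset.sum_mul, ih]
    rw [genHarmonic_succ, genHarmonic_succ]
    have hm : ((m:ℂ)+1) ≠ 0 := Nat.cast_add_one_ne_zero m
    linear_combination (-1/((m:ℂ)+1)) * e1 + (1/((m:ℂ)+1)) * e2

lemma altsum_choose (j : ℕ) : ∀ n i : ℕ, j ≤ n →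
    ∑ l ∈ range (j+1), (-1:ℂ)^l * (Nat.choose j l : ℂ) * (Nat.choose (n-l) i : ℂ)
      = if j ≤ i then ((Nat.choose (n-j) (i-j) : ℕ) : ℂ) else 0 := by
  induction j with
  | zero => intro n i _; simp
  | succ j ih =>
    intro n i hjn
    rw [Finset.sum_range_succ' (fun l => (-1:ℂ)^l * (Nat.choose (j+1) l : ℂ)
      * (Nat.choose (n-l) i : ℂ)) (j+1)]
    have hsp : ∀ l ∈ range (j+1),
        (-1:ℂ)^(l+1) * (Nat.choose (j+1) (l+1) : ℂ) * (Nat.choose (n-(l+1)) i : ℂ)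
        = (-1:ℂ)^(l+1) * (Nat.choose j l : ℂ) * (Nat.choose (n-(l+1)) i : ℂ)
          + (-1:ℂ)^(l+1) * (Nat.choose j (l+1) : ℂ) * (Nat.choose (n-(l+1)) i : ℂ) := by
      intro l _
      rw [Nat.choose_succ_succ j l]
      push_cast; ring
    rw [Finset.sum_congr rfl hsp, Finset.sum_add_distrib]
    have hA : ∑ l ∈ range (j+1),
        (-1:ℂ)^(l+1) * (Nat.choose j l : ℂ) * (Nat.choose (n-(l+1)) i : ℂ)
        = -(if j ≤ i then ((Nat.choose (n-1-j) (i-j) : ℕ) : ℂ) else 0) := by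
      rw [← ih (n-1) i (by omega), ← Finset.sum_neg_distrib]
      apply Finset.sum_congr rfl
      intro l _
      have : n - (l+1) = n - 1 - l := by omega
      rw [this, pow_succ]
      ring
    have hB : (∑ l ∈ range (j+1),
          (-1:ℂ)^(l+1) * (Nat.choose j (l+1) : ℂ) * (Nat.choose (n-(l+1)) i : ℂ))
        + (-1:ℂ)^0 * (Nat.choose (j+1) 0 : ℂ) * (Nat.choose (n-0) i : ℂ)
        = if j ≤ i then ((Nat.choose (n-j) (i-j) : ℕ) : ℂ) else 0 := by
      rw [← ih n i (by omega)]
      rw [Finset.sum_range_succ (fun l => (-1:ℂ)^(l+1) * (Nat.choose j (l+1) : ℂ)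
        * (Nat.choose (n-(l+1)) i : ℂ)) j]
      rw [Nat.choose_succ_self]
      rw [Finset.sum_range_succ' (fun l => (-1:ℂ)^l * (Nat.choose j l : ℂ)
        * (Nat.choose (n-l) i : ℂ)) j]
      simp
    rw [add_assoc, hB, hA]
    by_cases h1 : j + 1 ≤ i
    · have hji : j ≤ i := by omega
      rw [if_pos hji, if_pos hji, if_pos h1]
      have hnat : Nat.choose (n-j) (i-j)
          = Nat.choose (n-(j+1)) (i-(j+1)) + Nat.choose (n-(j+1)) (i-j) := by
        have h3 : n - j = (n-(j+1)) + 1 := by omega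
        have h4 : i - j = (i-(j+1)) + 1 := by omega
        rw [h3, h4, Nat.choose_succ_succ]
      have h5 : n - 1 - j = n - (j+1) := by omega
      rw [h5, hnat]
      push_cast; ring
    · rw [if_neg h1]
      by_cases h2 : j ≤ i
      · have hij : i = j := by omega
        subst hij
        simp
      · rw [if_neg h2, if_neg h2]; ring

lemma trinomN (n j l : ℕ) (h : l ≤ j) :
    Nat.choose n l * Nat.choose (n-l) (j-l) = Nat.choose n j * Nat.choose j l := by
  rcases le_or_gt j n with hj | hj
  · exact (Nat.choose_mul h).symm
  · rw [Nat.choose_eq_zero_of_lt hj, Nat.zero_mul]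
    rcases le_or_gt l n with hl | hl
    · rw [Nat.choose_eq_zero_of_lt (show n - l < j - l by omega), Nat.mul_zero]
    · rw [Nat.choose_eq_zero_of_lt hl, Nat.zero_mul]

lemma trinomC (n j l : ℕ) :
    (Nat.choose n l : ℂ) * (if l ≤ j then ((Nat.choose (n-l) (j-l) : ℕ) : ℂ) else 0)
      = (Nat.choose n j : ℂ) * (Nat.choose j l : ℂ) := by
  split_ifs with h
  · exact_mod_cast congrArg (Nat.cast (R := ℂ)) (trinomN n j l h)
  · rw [Nat.choose_eq_zero_of_lt (by omega : j < l)]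
    simp


theorem stmt_17 (n p : ℕ) (hn : 1 ≤ n) (α z : ℂ) (hz : z ≠ -1) :
    ∑ j ∈ Finset.range (n + 1),
        (Nat.choose n j : ℂ) * (j : ℂ) ^ p * genHarmonic α j * z ^ j =
      ∑ l ∈ Finset.range (p + 1), ∑ j ∈ Finset.range (p + 1),
        (-1) ^ l * (Nat.choose n l : ℂ) *
          (if l ≤ j then (Nat.choose (n - l) (j - l) : ℂ) else 0) *
          (Nat.factorial j : ℂ) * (stirling2 p j : ℂ) * (1 + z) ^ (n - l) *
          (genHarmonic ((1 + α * z) / (1 + z)) (n - l) -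
            genHarmonic (1 / (1 + z)) (n - l)) := by
  have hz1 : (1:ℂ) + z ≠ 0 := by
    intro h; apply hz; linear_combination h
  have hext : ∀ m, m ≤ n →
      (1+z)^m * (genHarmonic ((1+α*z)/(1+z)) m - genHarmonic (1/(1+z)) m)
        = ∑ i ∈ range (n+1), (Nat.choose m i : ℂ) * genHarmonic α i * z^i := by
    intro m hm
    rw [← base α z hz1 m]
    apply Finset.sum_subset
    · intro x hx
      simp only [Finset.mem_range] at *
      omega
    · intro i _ hi
      simp only [Finset.mem_range, not_lt] at hi
      rw [Nat.choose_eq_zero_of_lt (by omega)]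
      simp
  have hpow : ∀ i : ℕ, ((i:ℂ))^p
      = ∑ j ∈ range (p+1), (stirling2 p j : ℂ) * (Nat.factorial j : ℂ) * (Nat.choose i j : ℂ) := by
    intro i
    exact_mod_cast congrArg (Nat.cast (R := ℂ)) (pow_eq_sum_stirling2 p i)
  symm
  calc
    ∑ l ∈ range (p + 1), ∑ j ∈ range (p + 1),
        (-1) ^ l * (Nat.choose n l : ℂ) *
          (if l ≤ j then (Nat.choose (n - l) (j - l) : ℂ) else 0) *
          (Nat.factorial j : ℂ) * (stirling2 p j : ℂ) * (1 + z) ^ (n - l) *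
          (genHarmonic ((1 + α * z) / (1 + z)) (n - l) -
            genHarmonic (1 / (1 + z)) (n - l))
      = ∑ l ∈ range (p + 1), ∑ j ∈ range (p + 1), ∑ i ∈ range (n + 1),
        (-1) ^ l * (Nat.choose n l : ℂ) *
          (if l ≤ j then (Nat.choose (n - l) (j - l) : ℂ) else 0) *
          (Nat.factorial j : ℂ) * (stirling2 p j : ℂ) *
          ((Nat.choose (n-l) i : ℂ) * genHarmonic α i * z^i) := by
        apply Finset.sum_congr rfl; intro l _
        apply Finset.sum_congr rfl; intro j _
        rw [mul_assoc, hext (n-l) (by omega), Finset.mul_sum]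
    _ = ∑ j ∈ range (p + 1), ∑ i ∈ range (n + 1),
        (Nat.choose n j : ℂ) * (Nat.factorial j : ℂ) * (stirling2 p j : ℂ) *
          (∑ l ∈ range (p + 1),
            (-1:ℂ)^l * (Nat.choose j l : ℂ) * (Nat.choose (n-l) i : ℂ)) *
          genHarmonic α i * z^i := by
        rw [Finset.sum_comm]
        apply Finset.sum_congr rfl; intro j _
        rw [Finset.sum_comm]
        apply Finset.sum_congr rfl; intro i _
        rw [Finset.mul_sum, Finset.sum_mul, Finset.sum_mul]
        apply Finset.sum_congr rfl; intro l _
        have := trinomC n j l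
        calc (-1) ^ l * (Nat.choose n l : ℂ) *
              (if l ≤ j then (Nat.choose (n - l) (j - l) : ℂ) else 0) *
              (Nat.factorial j : ℂ) * (stirling2 p j : ℂ) *
              ((Nat.choose (n-l) i : ℂ) * genHarmonic α i * z^i)
            = ((Nat.choose n l : ℂ) *
              (if l ≤ j then (Nat.choose (n - l) (j - l) : ℂ) else 0)) *
              ((-1)^l * (Nat.factorial j : ℂ) * (stirling2 p j : ℂ) *
              ((Nat.choose (n-l) i : ℂ) * genHarmonic α i * z^i)) := by ring
          _ = ((Nat.choose n j : ℂ) * (Nat.choose j l : ℂ)) *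
              ((-1)^l * (Nat.factorial j : ℂ) * (stirling2 p j : ℂ) *
              ((Nat.choose (n-l) i : ℂ) * genHarmonic α i * z^i)) := by rw [this]
          _ = _ := by ring
    _ = ∑ j ∈ range (p + 1), ∑ i ∈ range (n + 1),
        (Nat.choose n j : ℂ) * (Nat.factorial j : ℂ) * (stirling2 p j : ℂ) *
          (if j ≤ i then ((Nat.choose (n-j) (i-j) : ℕ) : ℂ) else 0) *
          genHarmonic α i * z^i := by
        apply Finset.sum_congr rfl; intro j hj
        apply Finset.sum_congr rfl; intro i _
        rcases le_or_gt j n with h | h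
        · have hs : ∑ l ∈ range (p + 1),
              (-1:ℂ)^l * (Nat.choose j l : ℂ) * (Nat.choose (n-l) i : ℂ)
              = ∑ l ∈ range (j + 1),
              (-1:ℂ)^l * (Nat.choose j l : ℂ) * (Nat.choose (n-l) i : ℂ) := by
            symm
            apply Finset.sum_subset
            · intro x hx
              simp only [Finset.mem_range] at hx hj ⊢
              omega
            · intro l _ hl
              simp only [Finset.mem_range, not_lt] at hl
              rw [Nat.choose_eq_zero_of_lt (by omega : j < l)]
              simp
          rw [hs, altsum_choose j n i h]
        · rw [Nat.choose_eq_zero_of_lt h]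
          push_cast
          ring
    _ = ∑ i ∈ range (n + 1),
        (Nat.choose n i : ℂ) * (i : ℂ)^p * genHarmonic α i * z^i := by
        rw [Finset.sum_comm]
        apply Finset.sum_congr rfl; intro i _
        rw [hpow i, Finset.mul_sum, Finset.sum_mul, Finset.sum_mul]
        apply Finset.sum_congr rfl; intro j _
        have := trinomC n i j
        calc (Nat.choose n j : ℂ) * (Nat.factorial j : ℂ) * (stirling2 p j : ℂ) *
              (if j ≤ i then ((Nat.choose (n-j) (i-j) : ℕ) : ℂ) else 0) *
              genHarmonic α i * z^i
            = ((Nat.choose n j : ℂ) *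
              (if j ≤ i then ((Nat.choose (n-j) (i-j) : ℕ) : ℂ) else 0)) *
              ((Nat.factorial j : ℂ) * (stirling2 p j : ℂ) * genHarmonic α i * z^i) := by ring
          _ = ((Nat.choose n i : ℂ) * (Nat.choose i j : ℂ)) *
              ((Nat.factorial j : ℂ) * (stirling2 p j : ℂ) * genHarmonic α i * z^i) := by
              rw [this]
          _ = _ := by ring
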